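/- arXiv:1902.03210 — 4 statements merged into one kernel-verified Lean document; each statement's English description precedes it below -/
import Mathlib

section
/- For finite types X and Y with |Y| ≥ 1, finite index sets I and J, and tensors F : X → R, G : I → Y → R, H : I → J → X → Y → R over a commutative semiring R, the fully unrolled sum ∑_{x∈X} ∑_{y : I → Y} F(x) · ∏_{i∈I} G(i, y(i)) · ∏_{i∈I} ∏_{j∈J} H(i,j,x,y(i)) equals the factored expression ∑_{x∈X} F(x) · ∏_{i∈I} ( ∑_{y∈Y} G(i,y) · ∏_{j∈J} H(i,j,x,y) ). -/
theorem nested_plate_sum_product_factorization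
    (X Y I J R : Type*) [Fintype X] [Fintype Y] [Fintype I] [DecidableEq I] [Fintype J]
    [CommSemiring R] (hY : 1 ≤ Fintype.card Y)
    (F : X → R) (G : I → Y → R) (H : I → J → X → Y → R) :
    ∑ x : X, ∑ y : I → Y,
        F x * (∏ i : I, G i (y i)) * (∏ i : I, ∏ j : J, H i j x (y i))
      = ∑ x : X, F x * ∏ i : I, ∑ yv : Y, G i yv * ∏ j : J, H i j x yv := by
  refine Finset.sum_congr rfl fun x _ => ?_
  rw [Finset.prod_univ_sum, Finset.mul_sum]
  refine Finset.sum_congr rfl fun y _ => ?_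
  rw [Finset.prod_mul_distrib, mul_assoc]
end

section
/- Let (V, F, E) be a finite factor graph over a commutative semiring and (V_c, F_c) a connected component of the bipartite graph with variable set V_c ⊆ V and factor set F_c ⊆ F, such that no factor outside F_c involves any variable in V_c. Then SumProduct(F, V) = SumProduct(F \ F_c ∪ {g}, V \ V_c), where g is the single factor defined by g = SumProduct(F_c, V_c) viewed as a function of the remaining variables involved by factors in F_c. -/
/-- Correctness of eliminating a connected component: variables split into the
component's variables `Vc` and the remaining variables `Vr`; factors split into
the component's factors `Fc` (which may depend on both `Vc` and `Vr`) and the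
remaining factors `Fr`, which involve no variable of `Vc`.  Contracting the
component to the single new factor `g xr = ∑ xc, ∏ f ∈ Fc, fac f xc xr`
preserves the sum-product. -/
theorem sum_product_eliminate_component
    (Vc Vr Fc Fr R : Type*) [Fintype Vc] [DecidableEq Vc] [Fintype Vr]
    [DecidableEq Vr] [Fintype Fc] [Fintype Fr] [CommSemiring R]
    (domc : Vc → Type*) [∀ v, Fintype (domc v)]
    (domr : Vr → Type*) [∀ v, Fintype (domr v)]
    (facc : Fc → (∀ v, domc v) → (∀ v, domr v) → R)
    (facr : Fr → (∀ v, domr v) → R)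
    (g : (∀ v, domr v) → R)
    (hg : ∀ xr, g xr = ∑ xc : ∀ v, domc v, ∏ f : Fc, facc f xc xr) :
    ∑ x : (∀ v, domc v) × (∀ v, domr v),
        (∏ f : Fc, facc f x.1 x.2) * (∏ f : Fr, facr f x.2)
      = ∑ xr : ∀ v, domr v, g xr * ∏ f : Fr, facr f xr := by
  rw [Fintype.sum_prod_type_right]
  simp [hg, Finset.sum_mul]
end

section
/- If a plated factor graph G contains the forbidden plated graph minor — three vertices u, v, w with edges (u,v) and (v,w), plates P(u) = {a}, P(v) = {a,b}, P(w) = {b} with a ≠ b — then for plate sizes M(a) = m ≥ 2 and M(b) = n ≥ 2, the graph obtained by unrolling this minor contains a cycle of length at least 4 (and in general the unrolled minor is the m×n 'grid-of-paths' graph containing K_{m,n} as a minor). -/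
/-- `H` is a minor of `G`. -/
def IsMinorOf {W V : Type} (H : SimpleGraph W) (G : SimpleGraph V) : Prop :=
  ∃ φ : W → Set V,
    (∀ w, (φ w).Nonempty) ∧
    (∀ w, (G.induce (φ w)).Connected) ∧
    (∀ w₁ w₂, w₁ ≠ w₂ → Disjoint (φ w₁) (φ w₂)) ∧
    (∀ w₁ w₂, H.Adj w₁ w₂ → ∃ u ∈ φ w₁, ∃ v ∈ φ w₂, G.Adj u v)

/-- Unrolling the forbidden plated graph minor `u — v — w` (with `P u = {a}`,
`P v = {a,b}`, `P w = {b}`) over plate sizes `M a = m`, `M b = n` gives the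
graph with vertices `u_1,…,u_m`, `w_1,…,w_n`, `v_{ij}`, and edges
`u_i — v_{ij}` and `v_{ij} — w_j`. -/
def unrolledMinorGraph (m n : ℕ) : SimpleGraph ((Fin m ⊕ Fin n) ⊕ Fin m × Fin n) :=
  SimpleGraph.fromRel (fun a b =>
    match a, b with
    | Sum.inl (Sum.inl i), Sum.inr p => p.1 = i
    | Sum.inl (Sum.inr j), Sum.inr p => p.2 = j
    | _, _ => False)

lemma adj_uv (m n : ℕ) (i : Fin m) (j : Fin n) :
    (unrolledMinorGraph m n).Adj (Sum.inl (Sum.inl i)) (Sum.inr (i, j)) :=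
  ⟨by simp, Or.inl rfl⟩

lemma adj_vw (m n : ℕ) (i : Fin m) (j : Fin n) :
    (unrolledMinorGraph m n).Adj (Sum.inr (i, j)) (Sum.inl (Sum.inr j)) :=
  ⟨by simp, Or.inr rfl⟩

/-- Branch sets for the `K_{m,n}` minor: the left vertex `i` maps to
`{u_i} ∪ {v_{ij} : j}`, the right vertex `j` maps to `{w_j}`. -/
def unrolledPhi (m n : ℕ) : Fin m ⊕ Fin n → Set ((Fin m ⊕ Fin n) ⊕ Fin m × Fin n)
  | Sum.inl i => {x | x = Sum.inl (Sum.inl i) ∨ ∃ j, x = Sum.inr (i, j)}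
  | Sum.inr j => {Sum.inl (Sum.inr j)}

lemma unrolledMinor_completeBipartite_minor (m n : ℕ) :
    IsMinorOf (completeBipartiteGraph (Fin m) (Fin n)) (unrolledMinorGraph m n) := by
  refine ⟨unrolledPhi m n, ?_, ?_, ?_, ?_⟩
  · rintro (i | j)
    · exact ⟨Sum.inl (Sum.inl i), Or.inl rfl⟩
    · exact ⟨Sum.inl (Sum.inr j), rfl⟩
  · rintro (i | j)
    · have : Nonempty (unrolledPhi m n (Sum.inl i)) := ⟨⟨Sum.inl (Sum.inl i), Or.inl rfl⟩⟩
      refine SimpleGraph.Connected.mk ?_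
      · rintro ⟨x, hx⟩ ⟨y, hy⟩
        have key : ∀ z (hz : z ∈ unrolledPhi m n (Sum.inl i)),
            ((unrolledMinorGraph m n).induce (unrolledPhi m n (Sum.inl i))).Reachable
              ⟨Sum.inl (Sum.inl i), Or.inl rfl⟩ ⟨z, hz⟩ := by
          rintro z (rfl | ⟨j, rfl⟩)
          · exact SimpleGraph.Reachable.refl _
          · exact SimpleGraph.Adj.reachable (adj_uv m n i j)
        exact ((key x hx).symm.trans (key y hy))
    · have : Nonempty (unrolledPhi m n (Sum.inr j)) := ⟨⟨Sum.inl (Sum.inr j), rfl⟩⟩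
      refine SimpleGraph.Connected.mk ?_
      rintro ⟨x, hx⟩ ⟨y, hy⟩
      simp only [unrolledPhi, Set.mem_singleton_iff] at hx hy
      subst hx; subst hy
      exact SimpleGraph.Reachable.refl _
  · rintro (i | j) (i' | j') hne
    · rw [Set.disjoint_left]
      rintro x (rfl | ⟨k, rfl⟩) (h | ⟨k', h⟩) <;> simp_all
    · rw [Set.disjoint_left]
      rintro x (rfl | ⟨k, rfl⟩) h <;> simp_all [unrolledPhi]
    · rw [Set.disjoint_left]
      rintro x h (h' | ⟨k', h'⟩) <;> simp_all [unrolledPhi]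
    · rw [Set.disjoint_left]
      rintro x h h' ; simp_all [unrolledPhi]
  · rintro (i | j) (i' | j') hadj <;> simp only [completeBipartiteGraph] at hadj <;>
      simp at hadj
    · exact ⟨Sum.inr (i, j'), Or.inr ⟨j', rfl⟩, Sum.inl (Sum.inr j'), rfl, adj_vw m n i j'⟩
    · exact ⟨Sum.inl (Sum.inr j), rfl, Sum.inr (i', j), Or.inr ⟨j, rfl⟩, (adj_vw m n i' j).symm⟩

/-- For plate sizes `m, n ≥ 2`, the unrolled forbidden minor contains a cycle
of length at least 4, and contains `K_{m,n}` as a minor. -/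
theorem unrolledMinor_cycle_and_completeBipartite_minor
    (m n : ℕ) (hm : 2 ≤ m) (hn : 2 ≤ n) :
    (∃ (v : (Fin m ⊕ Fin n) ⊕ Fin m × Fin n)
       (p : (unrolledMinorGraph m n).Walk v v), p.IsCycle ∧ 4 ≤ p.length) ∧
      IsMinorOf (completeBipartiteGraph (Fin m) (Fin n)) (unrolledMinorGraph m n) := by
  refine ⟨?_, unrolledMinor_completeBipartite_minor m n⟩
  set i0 : Fin m := ⟨0, by omega⟩
  set i1 : Fin m := ⟨1, by omega⟩
  set j0 : Fin n := ⟨0, by omega⟩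
  set j1 : Fin n := ⟨1, by omega⟩
  refine ⟨Sum.inl (Sum.inl i0),
    .cons (adj_uv m n i0 j0) (.cons (adj_vw m n i0 j0)
      (.cons (adj_vw m n i1 j0).symm (.cons (adj_uv m n i1 j0).symm
      (.cons (adj_uv m n i1 j1) (.cons (adj_vw m n i1 j1)
      (.cons (adj_vw m n i0 j1).symm (.cons (adj_uv m n i0 j1).symm .nil))))))),
    ?_, by simp⟩
  rw [SimpleGraph.Walk.isCycle_def]
  refine ⟨?_, by simp, ?_⟩
  · rw [SimpleGraph.Walk.isTrail_def]
    simp [Fin.ext_iff, Prod.ext_iff, i0, i1, j0, j1]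
  · simp [Fin.ext_iff, Prod.ext_iff, i0, i1, j0, j1]
end

section
/- Unrolling distinct plates commutes: for a plated bipartite graph G = (V, F, E, P) and distinct plates a ≠ b with size assignment M, unroll(unroll(G, M, a), M, b) is isomorphic (as a plated bipartite graph, preserving plate labels) to unroll(unroll(G, M, b), M, a). -/
/-- Vertices of the unrolling of plate `b`: each vertex `z` is replicated
`M b` times if `b ∈ P z`, and once otherwise. -/
def UnrollV (Z B : Type) [DecidableEq B] (P : Z → Finset B) (M : B → ℕ)
    (b : B) : Type :=
  Σ z : Z, Fin (if b ∈ P z then M b else 1)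

/-- Adjacency after unrolling plate `b`: copies `z_i`, `z'_j` are adjacent iff
`z, z'` were adjacent and either `i = j` or `b` is not a plate of both. -/
def unrollAdj {Z B : Type} [DecidableEq B] (Adj : Z → Z → Prop)
    (P : Z → Finset B) (M : B → ℕ) (b : B) :
    UnrollV Z B P M b → UnrollV Z B P M b → Prop :=
  fun x y => Adj x.1 y.1 ∧ (((x.2 : ℕ) = (y.2 : ℕ)) ∨ ¬(b ∈ P x.1 ∧ b ∈ P y.1))

/-- Plate labels after unrolling plate `b`: the plate `b` is removed. -/
def unrollP {Z B : Type} [DecidableEq B] (P : Z → Finset B) (M : B → ℕ)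
    (b : B) : UnrollV Z B P M b → Finset B :=
  fun x => P x.1 \ {b}

lemma card_eq_aux {Z B : Type} [DecidableEq B] (P : Z → Finset B) (M : B → ℕ)
    (c d : B) (h : c ≠ d) (z : Z) :
    (if c ∈ P z \ {d} then M c else 1) = (if c ∈ P z then M c else 1) := by
  simp [Finset.mem_sdiff, h]

/-- Unrolling distinct plates commutes: for distinct plates `a ≠ b`, the two
double unrollings are isomorphic as plated graphs, via a bijection that matches
copies `z_{(i,j)}` lying over the same base vertex `z`, preserves adjacency,
and preserves the remaining plate labels. -/
theorem unroll_comm (Z B : Type) [DecidableEq B] (Adj : Z → Z → Prop)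
    (P : Z → Finset B) (M : B → ℕ) (a b : B) (hab : a ≠ b) :
    ∃ e : UnrollV (UnrollV Z B P M a) B (unrollP P M a) M b
            ≃ UnrollV (UnrollV Z B P M b) B (unrollP P M b) M a,
      (∀ x, (e x).1.1 = x.1.1) ∧
      (∀ x y,
        unrollAdj (unrollAdj Adj P M a) (unrollP P M a) M b x y ↔
          unrollAdj (unrollAdj Adj P M b) (unrollP P M b) M a (e x) (e y)) ∧
      (∀ x, unrollP (unrollP P M b) M a (e x) = unrollP (unrollP P M a) M b x) := by
  refine ⟨⟨fun x => ⟨⟨x.1.1, Fin.cast (card_eq_aux P M b a hab.symm x.1.1) x.2⟩,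
      Fin.cast (card_eq_aux P M a b hab x.1.1).symm x.1.2⟩,
    fun x => ⟨⟨x.1.1, Fin.cast (card_eq_aux P M a b hab x.1.1) x.2⟩,
      Fin.cast (card_eq_aux P M b a hab.symm x.1.1).symm x.1.2⟩,
    fun x => rfl, fun x => rfl⟩, fun x => rfl, ?_, ?_⟩
  · intro x y
    simp only [unrollAdj, unrollP, Equiv.coe_fn_mk, Fin.coe_cast,
      Finset.mem_sdiff, Finset.mem_singleton, hab, hab.symm,
      not_false_iff, and_true]
    tauto
  · intro x
    simp only [unrollP, Equiv.coe_fn_mk]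
    ext c
    simp [Finset.mem_sdiff]
    tauto
end
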